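/- Let k ≥ 1 be an integer and let L be a language recognized by an n-state nondeterministic finite automaton N, where n > 1, such that every member of L is accepted by N on exactly k nondeterministic computation paths. Then there is an (n+1)-state affine finite automaton that accepts every x ∈ L with probability 1 and every x ∉ L with probability 0; i.e., L is recognized by an (n+1)-state AfA with zero error. -/

import Mathlib

open Matrix

/-- A nondeterministic finite automaton with `n` states over alphabet `α`:
a transition function `δ`, an initial state, and a set of accepting states. -/
structure NFAb (α : Type) (n : ℕ) where
  δ : Fin n → α → Finset (Fin n)
  start : Fin n
  accept : Finset (Fin n)

/-- `q` is a complete nondeterministic computation path of the transition function `δ`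
on the input string `x`: `q_r ∈ δ(q_{r−1}, x_r)` for all `1 ≤ r ≤ |x|`. -/
def IsPath {α : Type} {n : ℕ} (δ : Fin n → α → Finset (Fin n))
    (x : List α) (q : Fin (x.length + 1) → Fin n) : Prop :=
  ∀ r : Fin x.length, q r.succ ∈ δ (q r.castSucc) (x.get r)

/-- The NFA accepts `x` if some computation path on `x` starting at the initial state
ends in an accepting state. -/
def NFAb.Accepts {α : Type} {n : ℕ} (M : NFAb α n) (x : List α) : Prop :=
  ∃ q : Fin (x.length + 1) → Fin n,
    q 0 = M.start ∧ IsPath M.δ x q ∧ q (Fin.last x.length) ∈ M.accept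

/-- The number of accepting nondeterministic computation paths of the NFA on `x`. -/
noncomputable def NFAb.accPathCount {α : Type} {n : ℕ} (M : NFAb α n) (x : List α) : ℕ :=
  Nat.card {q : Fin (x.length + 1) → Fin n //
    q 0 = M.start ∧ IsPath M.δ x q ∧ q (Fin.last x.length) ∈ M.accept}

/-- An affine finite automaton (AfA) with `N` states: an initial affine state (entry sum
`1`), an affine operator (each column summing to `1`) for the left end-marker `¢`, for
each input symbol, and for the right end-marker `$`, and a set of accepting states. -/
structure AfA (α : Type) (N : ℕ) where
  init : Fin N → ℝ
  init_sum : ∑ i, init i = 1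
  opL : Matrix (Fin N) (Fin N) ℝ
  op : α → Matrix (Fin N) (Fin N) ℝ
  opR : Matrix (Fin N) (Fin N) ℝ
  opL_affine : ∀ j, ∑ i, opL i j = 1
  op_affine : ∀ a j, ∑ i, op a i j = 1
  opR_affine : ∀ j, ∑ i, opR i j = 1
  accept : Finset (Fin N)

/-- The final state of the AfA on input `x`: the initial state multiplied by the
operators of `¢`, the input symbols, and `$`, in order. -/
noncomputable def AfA.final {α : Type} {N : ℕ} (M : AfA α N) (x : List α) : Fin N → ℝ :=
  M.opR *ᵥ x.foldl (fun v a => M.op a *ᵥ v) (M.opL *ᵥ M.init)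

/-- The acceptance probability of the AfA on input `x`: the sum of the absolute values
of the final-state entries at accepting states, divided by the ℓ₁-norm of the final
state. -/
noncomputable def AfA.prob {α : Type} {N : ℕ} (M : AfA α N) (x : List α) : ℝ :=
  (∑ i ∈ M.accept, |M.final x i|) / (∑ i, |M.final x i|)

/-!
The affine automaton runs the path-count vector of the NFA. On the first `n` states it applies
the `0/1` transition matrices, so after reading `x` the entry of state `j` is the number of paths
from the start state to `j`; the extra state absorbs the remaining mass, keeping the state affine.
The right end-marker puts `(number of accepting paths) / k` on the (accepting) start state and the
rest on the extra state, so the final state is a unit vector: at an accepting state for members of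
`L` and at the rejecting extra state for non-members.
-/

section AffineOperators

variable {R : Type*} [Semiring R] {m ι : Type*} [Fintype m] [Fintype ι]

theorem sum_mulVec_of_sum_col_eq_one {A : Matrix m ι R} (hA : ∀ j, ∑ i, A i j = 1)
    (v : ι → R) : ∑ i, (A *ᵥ v) i = ∑ j, v j := by
  simp only [mulVec, dotProduct]
  rw [Finset.sum_comm]
  simp_rw [← Finset.sum_mul, hA, one_mul]

theorem sum_foldl_mulVec_of_sum_col_eq_one {α : Type*} {A : α → Matrix ι ι R}
    (hA : ∀ a j, ∑ i, A a i j = 1) (x : List α) (v : ι → R) :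
    ∑ i, (x.foldl (fun w a => A a *ᵥ w) v) i = ∑ i, v i := by
  induction x generalizing v with
  | nil => rfl
  | cons a x ih => rw [List.foldl_cons, ih, sum_mulVec_of_sum_col_eq_one (hA a)]

end AffineOperators

namespace AfA

variable {α : Type} {N : ℕ} (M : AfA α N) (x : List α)

theorem sum_final : ∑ i, M.final x i = 1 := by
  rw [final, sum_mulVec_of_sum_col_eq_one M.opR_affine,
    sum_foldl_mulVec_of_sum_col_eq_one M.op_affine, sum_mulVec_of_sum_col_eq_one M.opL_affine,
    M.init_sum]

variable {M x}

theorem prob_eq_zero_of_forall_mem_accept (h : ∀ i ∈ M.accept, M.final x i = 0) :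
    M.prob x = 0 := by
  rw [prob, Finset.sum_eq_zero fun i hi => by rw [h i hi, abs_zero], zero_div]

theorem prob_eq_one_of_forall_notMem_accept (h : ∀ i ∉ M.accept, M.final x i = 0) :
    M.prob x = 1 := by
  have hsum : ∑ i ∈ M.accept, M.final x i = 1 := by
    rw [Finset.sum_subset (Finset.subset_univ _) fun i _ hi => h i hi, M.sum_final]
  have habs : ∑ i ∈ M.accept, |M.final x i| = ∑ i, |M.final x i| :=
    Finset.sum_subset (Finset.subset_univ _) fun i _ hi => by rw [h i hi, abs_zero]
  have hpos : 0 < ∑ i ∈ M.accept, |M.final x i| := by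
    have := Finset.abs_sum_le_sum_abs (M.final x) M.accept
    rw [hsum, abs_one] at this
    linarith
  rw [prob, ← habs, div_self hpos.ne']

end AfA

section AffineExtension

variable {R : Type*} [Ring R] {n : ℕ}

/-- Block form: `B` upper left, last row `1 - (column sums of B)`, last column
`Pi.single (Fin.last n) 1`. -/
def affineExtend (B : Matrix (Fin n) (Fin n) R) : Matrix (Fin (n + 1)) (Fin (n + 1)) R :=
  Matrix.of fun i j => Fin.lastCases (if i = Fin.last n then 1 else 0)
    (fun j' => Fin.lastCases (1 - ∑ i', B i' j') (fun i' => B i' j') i) j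

theorem affineExtend_sum_col (B : Matrix (Fin n) (Fin n) R) (j : Fin (n + 1)) :
    ∑ i, affineExtend B i j = 1 := by
  induction j using Fin.lastCases with
  | last => simp [affineExtend]
  | cast j => simp [affineExtend, Fin.sum_univ_castSucc]

theorem Fin.init_affineExtend_mulVec (B : Matrix (Fin n) (Fin n) R) (v : Fin (n + 1) → R) :
    Fin.init (affineExtend B *ᵥ v) = B *ᵥ Fin.init v := by
  funext i
  simp [Fin.init, mulVec, dotProduct, affineExtend, Fin.sum_univ_castSucc]

theorem Fin.init_foldl_affineExtend_mulVec {α : Type*} (B : α → Matrix (Fin n) (Fin n) R)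
    (x : List α) (v : Fin (n + 1) → R) :
    Fin.init (x.foldl (fun w a => affineExtend (B a) *ᵥ w) v)
      = x.foldl (fun w a => B a *ᵥ w) (Fin.init v) := by
  induction x generalizing v with
  | nil => rfl
  | cons a x ih => rw [List.foldl_cons, ih, Fin.init_affineExtend_mulVec, List.foldl_cons]

end AffineExtension

section PathCount

variable {α : Type} {n : ℕ} (δ : Fin n → α → Finset (Fin n))

theorem isPath_nil (q : Fin 1 → Fin n) : IsPath δ [] q := fun r => r.elim0

theorem isPath_cons_iff {a : α} {x : List α} {q : Fin (x.length + 2) → Fin n} :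
    IsPath δ (a :: x) q ↔ q 1 ∈ δ (q 0) a ∧ IsPath δ x (Fin.tail q) :=
  Fin.forall_fin_succ

noncomputable def pathCount (s : Fin n) (x : List α) (T : Finset (Fin n)) : ℕ :=
  Nat.card {q : Fin (x.length + 1) → Fin n //
    q 0 = s ∧ IsPath δ x q ∧ q (Fin.last x.length) ∈ T}

theorem pathCount_nil (s : Fin n) (T : Finset (Fin n)) :
    pathCount δ s [] T = if s ∈ T then 1 else 0 := by
  split_ifs with hs
  · rw [pathCount, Nat.card_eq_one_iff_unique]
    refine ⟨⟨fun q p => Subtype.ext (funext fun r => ?_)⟩,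
      ⟨⟨fun _ => s, rfl, isPath_nil δ _, hs⟩⟩⟩
    rw [Fin.fin_one_eq_zero r, q.2.1, p.2.1]
  · rw [pathCount, Finite.card_eq_zero_iff, isEmpty_subtype]
    rintro q ⟨rfl, -, hq⟩
    exact hs hq

def pathConsEquiv (s : Fin n) (a : α) (x : List α) (T : Finset (Fin n)) :
    {q : Fin ((a :: x).length + 1) → Fin n //
      q 0 = s ∧ IsPath δ (a :: x) q ∧ q (Fin.last (a :: x).length) ∈ T} ≃
    Σ i : δ s a, {p : Fin (x.length + 1) → Fin n //
      p 0 = i ∧ IsPath δ x p ∧ p (Fin.last x.length) ∈ T} where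
  toFun q := ⟨⟨q.1 1, by
      obtain ⟨q, rfl, hq, -⟩ := q
      exact ((isPath_cons_iff δ).1 hq).1⟩,
    Fin.tail q.1, rfl, ((isPath_cons_iff δ).1 q.2.2.1).2, q.2.2.2⟩
  invFun p := ⟨Fin.cons s p.2.1, rfl,
    (isPath_cons_iff δ).2 ⟨by rw [Fin.cons_one, Fin.cons_zero, p.2.2.1]; exact p.1.2,
      p.2.2.2.1⟩, p.2.2.2.2⟩
  left_inv q := by
    obtain ⟨q, rfl, -⟩ := q
    exact Subtype.ext (Fin.cons_self_tail q)
  right_inv p := Sigma.subtype_ext (Subtype.ext p.2.2.1) rfl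

theorem pathCount_cons (s : Fin n) (a : α) (x : List α) (T : Finset (Fin n)) :
    pathCount δ s (a :: x) T = ∑ i ∈ δ s a, pathCount δ i x T := by
  rw [pathCount, Nat.card_congr (pathConsEquiv δ s a x T), Nat.card_sigma,
    ← Finset.sum_coe_sort (δ s a)]
  rfl

end PathCount

section TransitionMatrix

variable {α : Type} {n : ℕ} (δ : Fin n → α → Finset (Fin n))

noncomputable def transitionMatrix (a : α) : Matrix (Fin n) (Fin n) ℝ :=
  Matrix.of fun i j => if i ∈ δ j a then 1 else 0

theorem pathCount_cons_vecMul (a : α) (x : List α) (T : Finset (Fin n)) :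
    (fun s => (pathCount δ s (a :: x) T : ℝ))
      = (fun s => (pathCount δ s x T : ℝ)) ᵥ* transitionMatrix δ a := by
  funext s
  simp [pathCount_cons, vecMul, dotProduct, transitionMatrix]

theorem sum_foldl_transitionMatrix_mulVec (x : List α) (T : Finset (Fin n)) (w : Fin n → ℝ) :
    ∑ j ∈ T, x.foldl (fun w a => transitionMatrix δ a *ᵥ w) w j
      = ∑ s, w s * pathCount δ s x T := by
  suffices h : ∀ w, (fun s => (pathCount δ s [] T : ℝ)) ⬝ᵥ
      x.foldl (fun w a => transitionMatrix δ a *ᵥ w) w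
        = (fun s => (pathCount δ s x T : ℝ)) ⬝ᵥ w by
    simpa [pathCount_nil, dotProduct, mul_comm] using h w
  induction x with
  | nil => exact fun _ => rfl
  | cons a x ih =>
    intro w
    rw [List.foldl_cons, ih, pathCount_cons_vecMul, dotProduct_mulVec]

end TransitionMatrix

namespace NFAb

variable {α : Type} {n : ℕ} (N : NFAb α n) (k : ℕ)

theorem accPathCount_eq_zero_iff (x : List α) : N.accPathCount x = 0 ↔ ¬N.Accepts x := by
  rw [accPathCount, Finite.card_eq_zero_iff, isEmpty_subtype, Accepts, not_exists]

noncomputable def acceptanceMatrix : Matrix (Fin n) (Fin n) ℝ :=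
  Matrix.of fun i j => if i = N.start ∧ j ∈ N.accept then (k : ℝ)⁻¹ else 0

noncomputable def toAfA : AfA α (n + 1) where
  init := Pi.single N.start.castSucc 1
  init_sum := by simp
  opL := 1
  op a := affineExtend (transitionMatrix N.δ a)
  opR := affineExtend (N.acceptanceMatrix k)
  opL_affine j := by simp [Matrix.one_apply]
  op_affine a := affineExtend_sum_col _
  opR_affine := affineExtend_sum_col _
  accept := {N.start.castSucc}

variable {N k}

theorem toAfA_final_castSucc (x : List α) (i : Fin n) :
    (N.toAfA k).final x i.castSucc = if i = N.start then (N.accPathCount x : ℝ) / k else 0 := by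
  set u := x.foldl (fun w a => transitionMatrix N.δ a *ᵥ w) (Pi.single N.start 1)
  have hinit :
      Fin.init (Pi.single N.start.castSucc 1 : Fin (n + 1) → ℝ) = Pi.single N.start 1 := by
    funext j
    simp [Fin.init, Pi.single_apply]
  have hfinal : Fin.init ((N.toAfA k).final x) = N.acceptanceMatrix k *ᵥ u := by
    simp only [AfA.final, toAfA, one_mulVec, Fin.init_affineExtend_mulVec,
      Fin.init_foldl_affineExtend_mulVec, hinit, u]
  have hcount : ∑ j ∈ N.accept, u j = N.accPathCount x := by
    rw [sum_foldl_transitionMatrix_mulVec]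
    simp [Pi.single_apply, accPathCount, pathCount]
  change Fin.init ((N.toAfA k).final x) i = _
  rw [hfinal]
  by_cases hi : i = N.start
  · simp [hi, acceptanceMatrix, mulVec, dotProduct, Finset.sum_ite_mem, ← Finset.mul_sum, hcount,
      div_eq_inv_mul]
  · simp [hi, acceptanceMatrix, mulVec, dotProduct]

theorem toAfA_final_last (x : List α) :
    (N.toAfA k).final x (Fin.last n) = 1 - (N.accPathCount x : ℝ) / k := by
  have h := (N.toAfA k).sum_final x
  simp only [Fin.sum_univ_castSucc, toAfA_final_castSucc, Finset.sum_ite_eq', Finset.mem_univ,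
    if_true] at h
  linarith

theorem toAfA_prob_eq_one {x : List α} (hacc : N.Accepts x) (hx : N.accPathCount x = k) :
    (N.toAfA k).prob x = 1 := by
  have hk : (k : ℝ) ≠ 0 := by
    rw [← hx]
    exact_mod_cast (N.accPathCount_eq_zero_iff x).not_left.2 hacc
  refine AfA.prob_eq_one_of_forall_notMem_accept fun i hi => ?_
  induction i using Fin.lastCases with
  | last => rw [toAfA_final_last, hx, div_self hk, sub_self]
  | cast i =>
    have hi : i ≠ N.start := fun h => hi (by simp [toAfA, h])
    rw [toAfA_final_castSucc, if_neg hi]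

theorem toAfA_prob_eq_zero {x : List α} (hrej : ¬N.Accepts x) : (N.toAfA k).prob x = 0 := by
  refine AfA.prob_eq_zero_of_forall_mem_accept fun i hi => ?_
  rw [Finset.mem_singleton.1 hi, toAfA_final_castSucc, (N.accPathCount_eq_zero_iff x).2 hrej]
  simp

end NFAb

theorem nfa_k_paths_to_afa_zero_error_general {α : Type} (k : ℕ)
    (L : Set (List α)) (n : ℕ) (N : NFAb α n)
    (hrec : ∀ x, x ∈ L ↔ N.Accepts x)
    (hk' : ∀ x ∈ L, N.accPathCount x = k) :
    ∃ M : AfA α (n + 1),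
      (∀ x ∈ L, M.prob x = 1) ∧ (∀ x ∉ L, M.prob x = 0) :=
  ⟨N.toAfA k, fun x hx => NFAb.toAfA_prob_eq_one ((hrec x).1 hx) (hk' x hx),
    fun x hx => NFAb.toAfA_prob_eq_zero (mt (hrec x).2 hx)⟩

/-- If `L` is recognized by an `n`-state NFA with `n > 1` that accepts every member of
`L` on exactly `k ≥ 1` nondeterministic computation paths, then `L` is recognized by an
`(n+1)`-state AfA with zero error: every member is accepted with probability `1` and
every non-member with probability `0`. -/
theorem nfa_k_paths_to_afa_zero_error {α : Type} (k : ℕ) (hk : 1 ≤ k)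
    (L : Set (List α)) (n : ℕ) (hn : 1 < n) (N : NFAb α n)
    (hrec : ∀ x, x ∈ L ↔ N.Accepts x)
    (hk' : ∀ x ∈ L, N.accPathCount x = k) :
    ∃ M : AfA α (n + 1),
      (∀ x ∈ L, M.prob x = 1) ∧ (∀ x ∉ L, M.prob x = 0) :=
  nfa_k_paths_to_afa_zero_error_general k L n N hrec hk'
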